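/- arXiv:1307.6174 — 2 statements merged into one kernel-verified Lean document; each statement's English description precedes it below -/
import Mathlib

section
/- Let K be a field and b, c ∈ K such that the Kubert-Tate curve E(b,c) has nonzero discriminant. Then the point (0,0) on E(b,c) has order exactly 4 if and only if c = 0. -/
/-- The Kubert-Tate normal form curve E(b,c) : y^2 + (1-c)xy - by = x^3 - bx^2. -/
def Ebc {K : Type*} [CommRing K] (b c : K) : WeierstrassCurve.Affine K :=
  { a₁ := 1 - c, a₂ := -b, a₃ := -b, a₄ := 0, a₆ := 0 }
/-- The point (0, 0) on E(b,c), nonsingular since the discriminant is nonzero. -/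
noncomputable def P₀ {K : Type*} [Field K] (b c : K) (hΔ : (Ebc b c).Δ ≠ 0) :
    (Ebc b c).Point :=
  .some _ _ (((Ebc b c).equation_iff_nonsingular_of_Δ_ne_zero hΔ).mp ((Ebc b c).equation_zero.mpr rfl))

/-!
The tangent to E(b,c) at (0,0) is the line y = 0, which meets the curve again at (b,0); hence
2·(0,0) = -(b,0) = (b,bc). The point (b,bc) is 2-torsion exactly when it equals its negative
(b,0), i.e. when bc = 0, and b ≠ 0 because the discriminant is divisible by b. So 4·(0,0) = 0
iff c = 0, while 2·(0,0) ≠ 0 always, which pins the order down to 4.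
-/

lemma addOrderOf_eq_four_iff {G : Type*} [AddMonoid G] {x : G} (hx : 2 • x ≠ 0) :
    addOrderOf x = 4 ↔ 4 • x = 0 :=
  ⟨fun h ↦ h ▸ addOrderOf_nsmul_eq_zero x,
    fun h ↦ addOrderOf_eq_prime_pow (p := 2) (n := 1) (by simpa using hx) (by simpa using h)⟩

namespace WeierstrassCurve.Affine.Point

lemma some_add_self_eq_zero_iff {F : Type*} [Field F] [DecidableEq F]
    {W : WeierstrassCurve.Affine F} {x y : F} (h : W.Nonsingular x y) :
    some _ _ h + some _ _ h = 0 ↔ y = W.negY x y :=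
  ⟨fun h0 ↦ by_contra fun hy ↦ some_ne_zero _ ((add_self_of_Y_ne hy).symm.trans h0),
    add_self_of_Y_eq⟩

end WeierstrassCurve.Affine.Point

namespace Ebc

open WeierstrassCurve.Affine

variable {K : Type*} [Field K] {b c : K}

lemma b_ne_zero_of_Δ_ne_zero (hΔ : (Ebc b c).Δ ≠ 0) : b ≠ 0 := by
  rintro rfl
  apply hΔ
  simp [Ebc, WeierstrassCurve.Δ, WeierstrassCurve.b₂, WeierstrassCurve.b₄,
    WeierstrassCurve.b₆, WeierstrassCurve.b₈]

lemma nonsingular_b_mul (hΔ : (Ebc b c).Δ ≠ 0) : (Ebc b c).Nonsingular b (b * c) := by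
  rw [← (Ebc b c).equation_iff_nonsingular_of_Δ_ne_zero hΔ, equation_iff]
  simp only [Ebc]
  ring

lemma negY_b_mul : (Ebc b c).negY b (b * c) = 0 := by
  simp only [negY, Ebc]
  ring

lemma two_nsmul_P₀ [DecidableEq K] (hΔ : (Ebc b c).Δ ≠ 0) :
    2 • P₀ b c hΔ = .some _ _ (nonsingular_b_mul hΔ) := by
  have hy : (0 : K) ≠ (Ebc b c).negY 0 0 := by
    simpa [negY, Ebc] using (b_ne_zero_of_Δ_ne_zero hΔ).symm
  have hslope : (Ebc b c).slope 0 0 0 0 = 0 := by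
    rw [slope_of_Y_ne rfl hy]
    simp [Ebc]
  rw [two_nsmul, P₀, Point.add_self_of_Y_ne hy, Point.some.injEq]
  constructor
  · rw [addX, hslope]; simp only [Ebc]; ring
  · rw [addY, negAddY, negY, addX, hslope]; simp only [Ebc]; ring

lemma four_nsmul_P₀_eq_zero_iff [DecidableEq K] (hΔ : (Ebc b c).Δ ≠ 0) :
    4 • P₀ b c hΔ = 0 ↔ c = 0 := by
  rw [show (4 : ℕ) = 2 * 2 from rfl, mul_nsmul, two_nsmul_P₀, two_nsmul,
    Point.some_add_self_eq_zero_iff, negY_b_mul, mul_eq_zero,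
    or_iff_right (b_ne_zero_of_Δ_ne_zero hΔ)]

end Ebc

open Classical in
theorem stmt_5 {K : Type*} [Field K] (b c : K) (hΔ : (Ebc b c).Δ ≠ 0) :
    addOrderOf (P₀ b c hΔ) = 4 ↔ c = 0 := by
  have h2 : 2 • P₀ b c hΔ ≠ 0 :=
    Ebc.two_nsmul_P₀ hΔ ▸ WeierstrassCurve.Affine.Point.some_ne_zero _
  rw [addOrderOf_eq_four_iff h2, Ebc.four_nsmul_P₀_eq_zero_iff]
end

section
/- Let K = ℚ(ζ₃) be the third cyclotomic field with ζ₃ a primitive third root of unity. The Kubert-Tate curve E(ζ₃, −1) over K, given by y² + 2xy − ζ₃y = x³ − ζ₃x², is an elliptic curve (its discriminant is nonzero) and the point (0,0) on it has order exactly 7. -/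
namespace WeierstrassCurve.Affine.Point

variable {F : Type*} [Field F] [DecidableEq F] {W : WeierstrassCurve.Affine F}

lemma exists_some_add_some_eq_some {x₁ x₂ y₁ y₂ x₃ y₃ : F} {h₁ : W.Nonsingular x₁ y₁}
    {h₂ : W.Nonsingular x₂ y₂} (hxy : ¬(x₁ = x₂ ∧ y₁ = W.negY x₂ y₂))
    (hx : W.addX x₁ x₂ (W.slope x₁ x₂ y₁ y₂) = x₃)
    (hy : W.addY x₁ x₂ y₁ (W.slope x₁ x₂ y₁ y₂) = y₃) :
    ∃ h₃ : W.Nonsingular x₃ y₃, some _ _ h₁ + some _ _ h₂ = some _ _ h₃ := by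
  subst hx hy
  exact ⟨_, add_some hxy⟩

end WeierstrassCurve.Affine.Point

namespace Ebc

open WeierstrassCurve.Affine WeierstrassCurve.Affine.Point

variable {K : Type*} [Field K] {b c : K}

lemma Δ_eq (b c : K) : (Ebc b c).Δ =
    b ^ 3 * (16 * b ^ 2 - b * (8 * c ^ 2 + 20 * c - 1) - c * (1 - c) ^ 3) := by
  simp only [Ebc, WeierstrassCurve.Δ, WeierstrassCurve.b₂, WeierstrassCurve.b₄,
    WeierstrassCurve.b₆, WeierstrassCurve.b₈]
  ring

lemma negY_eq (x y : K) : (Ebc b c).negY x y = -y - (1 - c) * x + b := by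
  simp only [negY, Ebc]
  ring

lemma nonsingular_zero_zero_iff : (Ebc b c).Nonsingular 0 0 ↔ b ≠ 0 := by
  simp [nonsingular_iff, equation_iff, Ebc, eq_comm]

variable [DecidableEq K]

lemma exists_zero_zero_add_self (h : (Ebc b c).Nonsingular 0 0) :
    ∃ h₂ : (Ebc b c).Nonsingular b (b * c), some _ _ h + some _ _ h = some _ _ h₂ := by
  have hb : b ≠ 0 := nonsingular_zero_zero_iff.1 h
  have hy : (0 : K) ≠ (Ebc b c).negY 0 0 := by
    rw [negY_eq]
    simpa using hb.symm
  have hℓ : (Ebc b c).slope 0 0 0 0 = 0 := by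
    rw [slope_of_Y_ne rfl hy]
    simp [Ebc]
  refine exists_some_add_some_eq_some (fun hxy ↦ hy hxy.2) ?_ ?_
  · rw [addX, hℓ]
    simp only [Ebc]
    ring
  · rw [addY, negAddY, negY_eq, addX, hℓ]
    simp only [Ebc]
    ring

lemma exists_add_zero_zero {h : (Ebc b c).Nonsingular 0 0}
    {h₂ : (Ebc b c).Nonsingular b (b * c)} :
    ∃ h₃ : (Ebc b c).Nonsingular c (b - c), some _ _ h₂ + some _ _ h = some _ _ h₃ := by
  have hb : b ≠ 0 := nonsingular_zero_zero_iff.1 h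
  have hℓ : (Ebc b c).slope b 0 (b * c) 0 = c := by
    rw [slope_of_X_ne hb]
    field_simp
    ring
  refine exists_some_add_some_eq_some (fun hxy ↦ hb hxy.1) ?_ ?_
  · rw [addX, hℓ]
    simp only [Ebc]
    ring
  · rw [addY, negAddY, negY_eq, addX, hℓ]
    simp only [Ebc]
    ring

lemma exists_add_self_of_sq_eq (hb : b ≠ 0) (hc : c ≠ 0) (hbc : b ^ 2 = b * c + c ^ 3)
    {h₂ : (Ebc b c).Nonsingular b (b * c)} :
    ∃ h₄ : (Ebc b c).Nonsingular c (c ^ 2), some _ _ h₂ + some _ _ h₂ = some _ _ h₄ := by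
  have hneg : (Ebc b c).negY b (b * c) = 0 := by
    rw [negY_eq]
    ring
  have hy : b * c ≠ (Ebc b c).negY b (b * c) := hneg ▸ mul_ne_zero hb hc
  have hℓ : (Ebc b c).slope b b (b * c) (b * c) = (b - c + c ^ 2) / c := by
    rw [slope_of_Y_ne rfl hy, hneg]
    simp only [Ebc]
    field_simp
    ring
  refine exists_some_add_some_eq_some (fun hxy ↦ hy hxy.2) ?_ ?_
  · rw [addX, hℓ]
    simp only [Ebc]
    field_simp
    linear_combination hbc
  · rw [addY, negAddY, negY_eq, addX, hℓ]
    simp only [Ebc]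
    field_simp
    linear_combination (c ^ 2 - b) * hbc

theorem addOrderOf_zero_zero (h : (Ebc b c).Nonsingular 0 0) (hbc : b ^ 2 = b * c + c ^ 3) :
    addOrderOf (some _ _ h) = 7 := by
  have hb : b ≠ 0 := nonsingular_zero_zero_iff.1 h
  have hc : c ≠ 0 := by
    rintro rfl
    exact hb (by simpa using hbc)
  obtain ⟨h₂, two⟩ := exists_zero_zero_add_self h
  obtain ⟨h₃, three⟩ := exists_add_zero_zero (h := h) (h₂ := h₂)
  obtain ⟨h₄, four⟩ := exists_add_self_of_sq_eq hb hc hbc (h₂ := h₂)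
  -- `4P = (c, c ^ 2)` and `3P = (c, b - c)` are opposite points.
  have seven : some _ _ h₄ + some _ _ h₃ = 0 := add_of_Y_eq rfl (by rw [negY_eq]; ring)
  have : Fact (Nat.Prime 7) := ⟨Nat.prime_seven⟩
  refine addOrderOf_eq_prime ?_ (some_ne_zero h)
  set P := some _ _ h
  calc 7 • P = (P + P + (P + P)) + (P + P + P) := by abel
    _ = 0 := by rw [two, four, three, seven]

end Ebc

open Classical in
theorem stmt_10 (ζ : CyclotomicField 3 ℚ) (hζ : IsPrimitiveRoot ζ 3) :
    (Ebc ζ (-1)).Δ ≠ 0 ∧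
    ∃ h : (Ebc ζ (-1)).Nonsingular 0 0,
      addOrderOf (WeierstrassCurve.Affine.Point.some _ _ h) = 7 := by
  have hζ₀ : ζ ≠ 0 := hζ.ne_zero (by norm_num)
  have hcyc : ζ ^ 2 + ζ + 1 = 0 := by
    have h := hζ.geom_sum_eq_zero (by norm_num)
    simp only [Finset.sum_range_succ, Finset.sum_range_zero] at h
    linear_combination h
  have hΔ : (Ebc ζ (-1)).Δ = -(3 * ζ + 8) := by
    rw [Ebc.Δ_eq]
    linear_combination (16 * ζ ^ 3 - 3 * ζ ^ 2 - 5 * ζ + 8) * hcyc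
  have hnorm : 3 * ζ + 8 ≠ 0 := fun h ↦ by
    have : (49 : CyclotomicField 3 ℚ) = 0 := by linear_combination 9 * hcyc - (3 * ζ - 5) * h
    norm_num at this
  have h : (Ebc ζ (-1)).Nonsingular 0 0 := Ebc.nonsingular_zero_zero_iff.2 hζ₀
  exact ⟨hΔ ▸ neg_ne_zero.2 hnorm, h, Ebc.addOrderOf_zero_zero h (by linear_combination hcyc)⟩
end
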